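/- For any v ≥ 1, the v×v matrix C_v with entries (C_v)_{p,q} = 1/(2(p+q)-3) has positive determinant. -/

import Mathlib

/-!
The matrix is the Gram matrix of the monomials `t ^ (2p)` in `L²[0, 1]`: its entries are
`∫₀¹ t ^ (2p + 2q) dt`, so `xᵀ C x = ∫₀¹ (∑ₚ xₚ t ^ (2p))² dt`. For `x ≠ 0` the integrand is the
square of a nonzero polynomial, which vanishes at only finitely many points, so the integral is
positive. Hence `C` is positive definite and its determinant is positive.
-/

open Polynomial intervalIntegral

namespace Matrix

noncomputable def monomialGram {ι : Type*} (e : ι → ℕ) : Matrix ι ι ℝ :=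
  of fun p q => ((e p + e q + 1 : ℕ) : ℝ)⁻¹

variable {ι : Type*} {e : ι → ℕ}

theorem monomialGram_apply_eq_integral (p q : ι) :
    monomialGram e p q = ∫ t in (0 : ℝ)..1, t ^ e p * t ^ e q := by
  simp [monomialGram, ← pow_add, integral_pow]

theorem isHermitian_monomialGram : (monomialGram e).IsHermitian :=
  IsHermitian.ext fun p q => by simp [monomialGram, add_comm]

theorem dotProduct_monomialGram_mulVec [Fintype ι] (x : ι → ℝ) :
    x ⬝ᵥ (monomialGram e *ᵥ x) = ∫ t in (0 : ℝ)..1, (∑ p, x p * t ^ e p) ^ 2 := by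
  calc x ⬝ᵥ (monomialGram e *ᵥ x)
      = ∑ p, ∑ q, x p * x q * ∫ t in (0 : ℝ)..1, t ^ e p * t ^ e q := by
        simp only [dotProduct, mulVec, monomialGram_apply_eq_integral, Finset.mul_sum]
        exact Finset.sum_congr rfl fun p _ => Finset.sum_congr rfl fun q _ => by ring
    _ = ∫ t in (0 : ℝ)..1, ∑ p, ∑ q, x p * x q * (t ^ e p * t ^ e q) := by
        rw [integral_finsetSum (f := fun p t => ∑ q, x p * x q * (t ^ e p * t ^ e q))
          fun p _ => (by fun_prop : Continuous _).intervalIntegrable 0 1]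
        refine Finset.sum_congr rfl fun p _ => ?_
        rw [integral_finsetSum (f := fun q t => x p * x q * (t ^ e p * t ^ e q))
          fun q _ => (by fun_prop : Continuous _).intervalIntegrable 0 1]
        simp_rw [integral_const_mul]
    _ = ∫ t in (0 : ℝ)..1, (∑ p, x p * t ^ e p) ^ 2 := by
        simp_rw [sq, Finset.sum_mul_sum]
        congr! 4 with t p - q -
        ring

end Matrix

theorem Polynomial.sum_C_mul_X_pow_ne_zero {ι : Type*} [Fintype ι] {e : ι → ℕ}
    (he : e.Injective) {x : ι → ℝ} (hx : x ≠ 0) : ∑ p, C (x p) * X ^ e p ≠ 0 := by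
  have hli : LinearIndependent ℝ fun p => (X ^ e p : ℝ[X]) := by
    simpa [Function.comp_def, coe_basisMonomials, X_pow_eq_monomial] using
      (basisMonomials ℝ).linearIndependent.comp e he
  simp_rw [← smul_eq_C_mul]
  exact fun h => hx (_root_.funext (Fintype.linearIndependent_iff.mp hli x h))

theorem Polynomial.integral_sq_eval_pos {P : ℝ[X]} (hP : P ≠ 0) {a b : ℝ} (hab : a < b) :
    0 < ∫ t in a..b, P.eval t ^ 2 := by
  obtain ⟨c, hc, hPc⟩ :=
    (Set.Icc_infinite hab).exists_notMem_finite (finite_setOfPred_isRoot hP)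
  exact integral_pos hab (by fun_prop) (fun t _ => sq_nonneg _) ⟨c, hc, sq_pos_of_ne_zero hPc⟩

theorem Matrix.posDef_monomialGram {ι : Type*} [Fintype ι] {e : ι → ℕ} (he : e.Injective) :
    (monomialGram e).PosDef := by
  refine posDef_iff_dotProduct_mulVec.mpr ⟨isHermitian_monomialGram, fun x hx => ?_⟩
  simpa [dotProduct_monomialGram_mulVec, eval_finsetSum] using
    integral_sq_eval_pos (sum_C_mul_X_pow_ne_zero he hx) zero_lt_one

theorem stmt_8_general (v : ℕ) :
    0 < Matrix.det (fun p q : Fin v => (1 : ℝ) / (2 * ((p : ℕ) + (q : ℕ)) + 1)) := by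
  have hC : (fun p q : Fin v => (1 : ℝ) / (2 * ((p : ℕ) + (q : ℕ)) + 1)) =
      Matrix.monomialGram fun p : Fin v => 2 * (p : ℕ) := by
    ext p q
    simp [Matrix.monomialGram, mul_add]
  rw [hC]
  exact (Matrix.posDef_monomialGram fun p q h => Fin.ext (by omega)).det_pos

theorem stmt_8 (v : ℕ) (hv : 1 ≤ v) :
    0 < Matrix.det (fun p q : Fin v => (1 : ℝ) / (2 * ((p : ℕ) + (q : ℕ)) + 1)) :=
  stmt_8_general v
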